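/- Let Γ be a simple graph that is strongly regular with parameters (275,112,30,56), let p1 and p2 be distinct non-adjacent vertices of Γ, and let C be a 5-clique of Γ containing p1. Then C contains exactly 2 common neighbours of p1 and p2 (in particular, C intersects the set of 56 common neighbours of p1 and p2 in exactly 2 vertices). -/

import Mathlib

/-!
Count, for each vertex `u` outside a clique `C` of a strongly regular graph, the number `f u` of
its neighbours in `C`. Double counting edges and paths of length two into `C` gives the first two
moments of `f` over the vertices outside `C` in terms of the parameters. For an SRG(275,112,30,56)
and a 5-clique these are `∑ f = 540` and `∑ f² = 1080` over `270` vertices, so `f` has mean `2`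
and variance `0`: every vertex outside `C`, in particular `p₂`, has exactly two neighbours in `C`.
-/

open Finset

theorem Finset.eq_of_sum_eq_of_sum_sq_eq {ι R : Type*} [CommRing R] [LinearOrder R]
    [IsStrictOrderedRing R] {s : Finset ι} {f : ι → R} {c : R}
    (h₁ : ∑ i ∈ s, f i = #s * c) (h₂ : ∑ i ∈ s, f i ^ 2 = #s * c ^ 2) :
    ∀ i ∈ s, f i = c := by
  have hvar : ∑ i ∈ s, (f i - c) ^ 2 = 0 := by
    simp_rw [sub_sq, sum_add_distrib, sum_sub_distrib, ← sum_mul, ← mul_sum, h₁, h₂, sum_const,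
      nsmul_eq_mul]
    ring
  intro i hi
  have := (sum_eq_zero_iff_of_nonneg fun j _ => sq_nonneg (f j - c)).1 hvar i hi
  exact sub_eq_zero.1 (pow_eq_zero_iff two_ne_zero |>.1 this)

namespace SimpleGraph

variable {V : Type*} {G : SimpleGraph V} [DecidableRel G.Adj]

theorem IsClique.filter_adj_eq_erase [DecidableEq V] {C : Finset V}
    (hC : G.IsClique (C : Set V)) {u : V} (hu : u ∈ C) : {x ∈ C | G.Adj u x} = C.erase u := by
  ext x
  simp only [mem_filter, mem_erase]
  exact ⟨fun ⟨hx, hux⟩ => ⟨hux.ne', hx⟩, fun ⟨hxu, hx⟩ => ⟨hx, hC hu hx hxu.symm⟩⟩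

variable [Fintype V]

theorem sum_card_filter_adj_of_isRegularOfDegree {k : ℕ} (hG : G.IsRegularOfDegree k)
    (C : Finset V) : ∑ u, #{x ∈ C | G.Adj u x} = #C * k := by
  rw [← smul_eq_mul, ← sum_const]
  refine (sum_card_bipartiteAbove_eq_sum_card_bipartiteBelow G.Adj (s := univ) (t := C)).trans
    (sum_congr rfl fun x _ => ?_)
  rw [← hG x, ← card_neighborFinset_eq_degree]
  congr 1
  ext u
  simp [bipartiteBelow, adj_comm]

theorem sum_sq_card_filter_adj_of_isClique {k ℓ : ℕ} (hG : G.IsRegularOfDegree k)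
    (hℓ : ∀ v w, G.Adj v w → Fintype.card (G.commonNeighbors v w) = ℓ) {C : Finset V}
    (hC : G.IsClique (C : Set V)) :
    ∑ u, #{x ∈ C | G.Adj u x} ^ 2 = #C * k + #C.offDiag * ℓ := by
  classical
  let r : V → V × V → Prop := fun u p => G.Adj u p.1 ∧ G.Adj u p.2
  have hsq : ∀ u, #{x ∈ C | G.Adj u x} ^ 2 = #((C ×ˢ C).bipartiteAbove r u) := fun u => by
    rw [sq, ← card_product, bipartiteAbove, filter_product]
  have hpair : ∀ p ∈ C ×ˢ C, #(univ.bipartiteBelow r p) = if p.1 = p.2 then k else ℓ := by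
    rintro ⟨x, y⟩ hp
    split_ifs with hxy
    · simp only at hxy
      subst hxy
      rw [← hG x, ← card_neighborFinset_eq_degree]
      congr 1
      ext u
      simp [bipartiteBelow, r, adj_comm]
    · have hxy' : G.Adj x y := hC (mem_product.1 hp).1 (mem_product.1 hp).2 hxy
      rw [← hℓ x y hxy', ← Set.toFinset_card]
      congr 1
      ext u
      simp [bipartiteBelow, r, adj_comm, mem_commonNeighbors]
  simp_rw [hsq]
  rw [sum_card_bipartiteAbove_eq_sum_card_bipartiteBelow, sum_congr rfl hpair,
    ← diag_union_offDiag, sum_union (disjoint_diag_offDiag C),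
    sum_congr rfl fun p hp => if_pos (mem_diag.1 hp).2,
    sum_congr rfl fun p hp => if_neg (mem_offDiag.1 hp).2.2, sum_const, sum_const, diag_card,
    smul_eq_mul, smul_eq_mul]

/-- `h₁` and `h₂` say that the first two moments of the number of neighbours in `C`, taken over
the `n - s` vertices outside `C`, are those of the constant `c`. -/
theorem IsSRGWith.card_filter_adj_eq_of_isNClique {n k ℓ μ s c : ℕ} (h : G.IsSRGWith n k ℓ μ)
    {C : Finset V} (hC : G.IsNClique s C)
    (h₁ : ((n : ℤ) - s) * c = s * (k + 1 - s))
    (h₂ : ((n : ℤ) - s) * c ^ 2 = s * (k + 1 - s) + s * (s - 1) * (ℓ + 2 - s))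
    {u : V} (hu : u ∉ C) : #{x ∈ C | G.Adj u x} = c := by
  classical
  set f : V → ℤ := fun u => #{x ∈ C | G.Adj u x}
  have hclique : ∀ v ∈ C, f v = s - 1 := fun v hv => by
    have hs : 1 ≤ s := hC.card_eq ▸ card_pos.2 ⟨v, hv⟩
    change (#{x ∈ C | G.Adj v x} : ℤ) = s - 1
    rw [hC.isClique.filter_adj_eq_erase hv, card_erase_of_mem hv, hC.card_eq,
      Nat.cast_sub hs, Nat.cast_one]
  have hcompl : (#Cᶜ : ℤ) = n - s := by
    rw [card_compl, Nat.cast_sub (card_le_univ C), h.card, hC.card_eq]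
  have hoffDiag : (#C.offDiag : ℤ) = s * s - s := by
    rw [offDiag_card, Nat.cast_sub (Nat.le_mul_self _), hC.card_eq, Nat.cast_mul]
  have hsum : ∑ v ∈ Cᶜ, f v = #Cᶜ * c := by
    have := congrArg (Nat.cast : ℕ → ℤ) (sum_card_filter_adj_of_isRegularOfDegree h.regular C)
    rw [← sum_add_sum_compl C] at this
    push_cast at this
    rw [sum_congr rfl hclique, sum_const, nsmul_eq_mul, hC.card_eq] at this
    rw [hcompl]
    linear_combination this - h₁
  have hsum_sq : ∑ v ∈ Cᶜ, f v ^ 2 = #Cᶜ * c ^ 2 := by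
    have := congrArg (Nat.cast : ℕ → ℤ)
      (sum_sq_card_filter_adj_of_isClique h.regular h.of_adj hC.isClique)
    rw [← sum_add_sum_compl C] at this
    push_cast at this
    change ∑ v ∈ C, f v ^ 2 + ∑ v ∈ Cᶜ, f v ^ 2 = _ at this
    rw [sum_congr rfl fun v hv => by rw [hclique v hv], sum_const, nsmul_eq_mul, hC.card_eq,
      hoffDiag] at this
    rw [hcompl]
    linear_combination this - h₂
  exact Int.ofNat_inj.1 (eq_of_sum_eq_of_sum_sq_eq hsum hsum_sq u (mem_compl.2 hu))

end SimpleGraph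

/-- Let Γ be a strongly regular graph with parameters (275,112,30,56), let p₁ and
p₂ be distinct non-adjacent vertices, and let C be a 5-clique containing p₁.
Then C contains exactly 2 common neighbours of p₁ and p₂. -/
theorem srg_275_five_clique_through_p1_meets_common_neighbours_in_two
    {V : Type*} [Fintype V] (Γ : SimpleGraph V) [DecidableRel Γ.Adj]
    (hΓ : Γ.IsSRGWith 275 112 30 56)
    (p₁ p₂ : V) (hne : p₁ ≠ p₂) (hnadj : ¬ Γ.Adj p₁ p₂)
    (C : Finset V) (hC : Γ.IsNClique 5 C) (hp₁ : p₁ ∈ C) :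
    {u : V | u ∈ C ∧ Γ.Adj p₁ u ∧ Γ.Adj p₂ u}.ncard = 2 := by
  have hp₂ : p₂ ∉ C := fun hp₂ => hnadj (hC.isClique hp₁ hp₂ hne)
  have hset : {u : V | u ∈ C ∧ Γ.Adj p₁ u ∧ Γ.Adj p₂ u} = ↑{x ∈ C | Γ.Adj p₂ x} := by
    ext u
    simp only [Set.mem_ofPred_eq, coe_filter]
    refine ⟨fun ⟨hu, _, hp₂u⟩ => ⟨hu, hp₂u⟩, fun ⟨hu, hp₂u⟩ => ⟨hu, ?_, hp₂u⟩⟩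
    exact hC.isClique hp₁ hu (by rintro rfl; exact hnadj hp₂u.symm)
  rw [hset, Set.ncard_coe_finset]
  exact hΓ.card_filter_adj_eq_of_isNClique hC (by norm_num) (by norm_num) hp₂
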